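/- arXiv:2409.08774 — 5 statements merged into one kernel-verified Lean document; each statement's English description precedes it below -/
import Mathlib

section
/- Let V be a finite-dimensional normed ℚ_p-vector space and let α_1, …, α_n be ℚ_p-linearly independent vectors. Then α_1, …, α_n form an orthogonal basis of their span if and only if |∑ a_i α_i| = max_i |a_i α_i| holds for every tuple (a_1,…,a_n) in which one coordinate equals 1 and the remaining coordinates lie in ℤ_p. -/
/-!
Both sides of the identity `N (∑ aᵢ • αᵢ) = maxᵢ N (aᵢ • αᵢ)` scale by `‖c‖` when the coefficient
vector `a` is replaced by `c • a`. Every coefficient vector is such a multiple of one whose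
largest coefficient, in norm, equals `1` and whose other coefficients have norm at most `1`.
-/

open Finset

theorem apply_sum_smul_eq_sup'_smul {𝕜 V ι : Type*} [SeminormedRing 𝕜] [AddCommMonoid V]
    [Module 𝕜 V] [Fintype ι] {N : V → ℝ}
    (hsmul : ∀ (x : 𝕜) (v : V), N (x • v) = ‖x‖ * N v) (hι : (univ : Finset ι).Nonempty)
    (α : ι → V) {a : ι → 𝕜}
    (ha : N (∑ i, a i • α i) = univ.sup' hι fun i => N (a i • α i)) (c : 𝕜) :
    N (∑ i, (c • a) i • α i) = univ.sup' hι fun i => N ((c • a) i • α i) := by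
  simp only [Pi.smul_apply, smul_eq_mul, mul_smul, ← smul_sum, hsmul, ha]
  exact mul₀_sup' (norm_nonneg c) _ _ _

theorem exists_eq_smul_of_coord_eq_one_of_norm_le_one {𝕜 ι : Type*} [NormedDivisionRing 𝕜]
    [Finite ι] [Nonempty ι] (a : ι → 𝕜) :
    ∃ (c : 𝕜) (b : ι → 𝕜) (i : ι), b i = 1 ∧ (∀ j, j ≠ i → ‖b j‖ ≤ 1) ∧ a = c • b := by
  obtain ⟨i, hi⟩ := Finite.exists_max fun j => ‖a j‖
  by_cases hai : a i = 0
  · refine ⟨0, 1, i, rfl, fun j _ => norm_one.le, ?_⟩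
    ext j
    simpa [hai] using hi j
  · refine ⟨a i, (a i)⁻¹ • a, i, inv_mul_cancel₀ hai, fun j _ => ?_, ?_⟩
    · rw [Pi.smul_apply, smul_eq_mul, norm_mul, norm_inv]
      exact inv_mul_le_one_of_le₀ (hi j) (norm_nonneg _)
    · rw [smul_smul, mul_inv_cancel₀ hai, one_smul]

theorem stmt3_general {p : ℕ} [Fact p.Prime] {V : Type*} [AddCommGroup V] [Module ℚ_[p] V]
    (N : V → ℝ)
    (hsmul : ∀ (x : ℚ_[p]) (v : V), N (x • v) = ‖x‖ * N v)
    {n : ℕ} (hn : 0 < n) (α : Fin n → V) :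
    (∀ a : Fin n → ℚ_[p],
        N (∑ i, a i • α i) =
          Finset.univ.sup' ⟨⟨0, hn⟩, Finset.mem_univ _⟩ (fun i => N (a i • α i))) ↔
    (∀ (a : Fin n → ℚ_[p]) (i : Fin n), a i = 1 → (∀ j, j ≠ i → ‖a j‖ ≤ 1) →
        N (∑ i, a i • α i) =
          Finset.univ.sup' ⟨⟨0, hn⟩, Finset.mem_univ _⟩ (fun i => N (a i • α i))) := by
  refine ⟨fun h a _ _ _ => h a, fun h a => ?_⟩
  have : Nonempty (Fin n) := ⟨⟨0, hn⟩⟩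
  obtain ⟨c, b, i, hbi, hb, rfl⟩ := exists_eq_smul_of_coord_eq_one_of_norm_le_one a
  exact apply_sum_smul_eq_sup'_smul hsmul _ α (h b i hbi hb) c

theorem stmt3 {p : ℕ} [Fact p.Prime] {V : Type*} [AddCommGroup V] [Module ℚ_[p] V]
    [FiniteDimensional ℚ_[p] V]
    (N : V → ℝ)
    (hnonneg : ∀ v, 0 ≤ N v)
    (hzero : ∀ v, N v = 0 ↔ v = 0)
    (hsmul : ∀ (x : ℚ_[p]) (v : V), N (x • v) = ‖x‖ * N v)
    (hna : ∀ v w, N (v + w) ≤ max (N v) (N w))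
    {n : ℕ} (hn : 0 < n) (α : Fin n → V) (hindep : LinearIndependent ℚ_[p] α) :
    (∀ a : Fin n → ℚ_[p],
        N (∑ i, a i • α i) =
          Finset.univ.sup' ⟨⟨0, hn⟩, Finset.mem_univ _⟩ (fun i => N (a i • α i))) ↔
    (∀ (a : Fin n → ℚ_[p]) (i : Fin n), a i = 1 → (∀ j, j ≠ i → ‖a j‖ ≤ 1) →
        N (∑ i, a i • α i) =
          Finset.univ.sup' ⟨⟨0, hn⟩, Finset.mem_univ _⟩ (fun i => N (a i • α i))) :=
  stmt3_general N hsmul hn α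
end

section
/- Let V be a finite-dimensional normed ℚ_p-vector space and let α_1, …, α_n be a basis of V with |α_1| = |α_2| = ⋯ = |α_n| = λ_1. Then α_1, …, α_n is an orthogonal basis of V if and only if |∑ a_i α_i| = λ_1 for every nonzero tuple (a_1, …, a_n) ∈ {0, 1, …, p−1}^n. -/
/-!
A nonzero digit `d < p` is a `p`-adic unit, so for an orthogonal basis of constant norm `λ₁` every
nonzero digit combination has norm `max ‖dᵢ‖ · λ₁ = λ₁`.

Conversely, divide a nonzero coefficient vector by a coefficient of maximal norm: the new
coefficients `cᵢ` lie in `ℤ_p` and one of them is a unit. Reducing modulo `p` writes `cᵢ = dᵢ + eᵢ`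
with digits `dᵢ`, not all zero, and `‖eᵢ‖ < 1`. Then `∑ dᵢ αᵢ` has norm `λ₁` by hypothesis while
`∑ eᵢ αᵢ` has norm `< λ₁`, so the strict ultrametric inequality gives `‖∑ cᵢ αᵢ‖ = λ₁`.
-/

open Finset

theorem IsNonarchimedean.apply_sum_lt {ι V : Type*} [AddCommMonoid V] {N : V → ℝ}
    (hna : IsNonarchimedean N) (h0 : N 0 = 0) {s : Finset ι} {f : ι → V} {C : ℝ} (hC : 0 < C)
    (h : ∀ i ∈ s, N (f i) < C) : N (∑ i ∈ s, f i) < C := by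
  rcases s.eq_empty_or_nonempty with rfl | hs
  · simpa [h0] using hC
  · exact (hna.apply_sum_le_sup hs).trans_lt ((sup'_lt_iff hs).2 h)

section MapSMul

variable {K V : Type*} [NormedField K] [AddCommGroup V] [Module K V] {N : V → ℝ}

theorem map_zero_of_map_smul (hsmul : ∀ (x : K) (v : V), N (x • v) = ‖x‖ * N v) : N 0 = 0 := by
  simpa using hsmul 0 0

theorem map_add_eq_left_of_lt (hsmul : ∀ (x : K) (v : V), N (x • v) = ‖x‖ * N v)
    (hna : IsNonarchimedean N) {v w : V} (h : N w < N v) : N (v + w) = N v := by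
  have hneg (u : V) : N u = N (-u) := by simpa using (hsmul (-1) u).symm
  rw [IsNonarchimedean.add_eq_max_of_ne' N hna hneg h.ne', max_eq_left h.le]

theorem sup'_map_smul_eq_of_forall_norm_le {ι : Type*} [Fintype ι]
    (hsmul : ∀ (x : K) (v : V), N (x • v) = ‖x‖ * N v) {α : ι → V} {lam : ℝ}
    (hα : ∀ i, N (α i) = lam) (hlam : 0 ≤ lam) (hs : (univ : Finset ι).Nonempty) {a : ι → K}
    {j : ι} (hj : ∀ i, ‖a i‖ ≤ ‖a j‖) :
    univ.sup' hs (fun i => N (a i • α i)) = ‖a j‖ * lam := by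
  simp only [hsmul, hα]
  exact le_antisymm (sup'_le _ _ fun i _ => mul_le_mul_of_nonneg_right (hj i) hlam)
    (le_sup'_of_le _ (mem_univ j) le_rfl)

end MapSMul

namespace Padic

variable {p : ℕ} [Fact p.Prime]

theorem norm_natCast_le_one (d : ℕ) : ‖(d : ℚ_[p])‖ ≤ 1 := by
  simpa using norm_int_le_one (p := p) d

theorem norm_natCast_eq_one_of_lt {d : ℕ} (hd0 : d ≠ 0) (hdp : d < p) : ‖(d : ℚ_[p])‖ = 1 := by
  rw [norm_natCast_eq_one_iff, (Fact.out : p.Prime).coprime_iff_not_dvd]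
  exact fun hdvd => hd0 (Nat.eq_zero_of_dvd_of_lt hdvd hdp)

theorem exists_lt_and_norm_sub_natCast_lt_one {x : ℚ_[p]} (hx : ‖x‖ ≤ 1) :
    ∃ d < p, ‖x - d‖ < 1 := by
  obtain ⟨d, hdp, hd⟩ := PadicInt.exists_mem_range (⟨x, hx⟩ : ℤ_[p])
  rw [IsLocalRing.mem_maximalIdeal, PadicInt.mem_nonunits] at hd
  exact ⟨d, hdp, hd⟩

end Padic

section DigitCriterion

variable {p : ℕ} [Fact p.Prime] {V ι : Type*} [AddCommGroup V] [Module ℚ_[p] V] [Fintype ι]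
  {N : V → ℝ} {α : ι → V} {lam : ℝ}

theorem sup'_natCast_smul_eq_of_digits (hsmul : ∀ (x : ℚ_[p]) (v : V), N (x • v) = ‖x‖ * N v)
    (hα : ∀ i, N (α i) = lam) (hlam : 0 ≤ lam) (hs : (univ : Finset ι).Nonempty) {d : ι → ℕ}
    (hdp : ∀ i, d i < p) (hd0 : d ≠ 0) :
    univ.sup' hs (fun i => N ((d i : ℚ_[p]) • α i)) = lam := by
  obtain ⟨j, hj⟩ := Function.ne_iff.1 hd0
  have hdj : ‖(d j : ℚ_[p])‖ = 1 := Padic.norm_natCast_eq_one_of_lt hj (hdp j)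
  rw [sup'_map_smul_eq_of_forall_norm_le hsmul hα hlam hs
    fun i => hdj.symm ▸ Padic.norm_natCast_le_one (d i), hdj, one_mul]

theorem map_sum_smul_eq_of_digits (hsmul : ∀ (x : ℚ_[p]) (v : V), N (x • v) = ‖x‖ * N v)
    (hna : IsNonarchimedean N) (hα : ∀ i, N (α i) = lam) (hlam : 0 < lam)
    (H : ∀ d : ι → ℕ, (∀ i, d i < p) → d ≠ 0 → N (∑ i, (d i : ℚ_[p]) • α i) = lam)
    {c : ι → ℚ_[p]} (hc : ∀ i, ‖c i‖ ≤ 1) {j : ι} (hj : ‖c j‖ = 1) : N (∑ i, c i • α i) = lam := by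
  choose d hdp hd using fun i => Padic.exists_lt_and_norm_sub_natCast_lt_one (hc i)
  have hdj : d j ≠ 0 := fun h => by simpa [h, hj] using hd j
  have hdigits : N (∑ i, (d i : ℚ_[p]) • α i) = lam := H d hdp (Function.ne_iff.2 ⟨j, hdj⟩)
  have hrest : N (∑ i, (c i - d i) • α i) < lam :=
    hna.apply_sum_lt (map_zero_of_map_smul hsmul) hlam fun i _ => by
      rw [hsmul, hα]
      exact mul_lt_of_lt_one_left hlam (hd i)
  have hsplit : ∑ i, c i • α i = ∑ i, (d i : ℚ_[p]) • α i + ∑ i, (c i - d i) • α i := by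
    rw [← sum_add_distrib]
    simp only [← add_smul, add_sub_cancel]
  rw [hsplit, map_add_eq_left_of_lt hsmul hna (hdigits ▸ hrest), hdigits]

theorem map_sum_smul_eq_sup'_of_digits (hsmul : ∀ (x : ℚ_[p]) (v : V), N (x • v) = ‖x‖ * N v)
    (hna : IsNonarchimedean N) (hα : ∀ i, N (α i) = lam) (hlam : 0 < lam)
    (H : ∀ d : ι → ℕ, (∀ i, d i < p) → d ≠ 0 → N (∑ i, (d i : ℚ_[p]) • α i) = lam)
    (hs : (univ : Finset ι).Nonempty) (a : ι → ℚ_[p]) :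
    N (∑ i, a i • α i) = univ.sup' hs (fun i => N (a i • α i)) := by
  obtain ⟨j, -, hj⟩ := exists_max_image univ (fun i => ‖a i‖) hs
  have hj (i : ι) : ‖a i‖ ≤ ‖a j‖ := hj i (mem_univ i)
  rw [sup'_map_smul_eq_of_forall_norm_le hsmul hα hlam.le hs hj]
  rcases eq_or_ne (a j) 0 with haj | haj
  · have ha : a = 0 := funext fun i => norm_le_zero_iff.1 (by simpa [haj] using hj i)
    simp [ha, map_zero_of_map_smul hsmul]
  · have hc (i : ι) : ‖(a j)⁻¹ * a i‖ ≤ 1 := by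
      rw [norm_mul, norm_inv, inv_mul_le_one₀ (norm_pos_iff.2 haj)]
      exact hj i
    have hcj : ‖(a j)⁻¹ * a j‖ = 1 := by rw [inv_mul_cancel₀ haj, norm_one]
    calc N (∑ i, a i • α i) = N (a j • ∑ i, ((a j)⁻¹ * a i) • α i) := by
          simp only [smul_sum, smul_smul, mul_inv_cancel_left₀ haj]
      _ = ‖a j‖ * lam := by
          rw [hsmul, map_sum_smul_eq_of_digits hsmul hna hα hlam H hc hcj]

end DigitCriterion

theorem stmt4 {p : ℕ} [Fact p.Prime] {V : Type*} [AddCommGroup V] [Module ℚ_[p] V]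
    (N : V → ℝ)
    (hnonneg : ∀ v, 0 ≤ N v)
    (hzero : ∀ v, N v = 0 ↔ v = 0)
    (hsmul : ∀ (x : ℚ_[p]) (v : V), N (x • v) = ‖x‖ * N v)
    (hna : ∀ v w, N (v + w) ≤ max (N v) (N w))
    {n : ℕ} (hn : 0 < n) (α : Module.Basis (Fin n) ℚ_[p] V)
    (lam : ℝ) (hlam : ∀ i, N (α i) = lam) :
    (∀ a : Fin n → ℚ_[p],
        N (∑ i, a i • α i) =
          Finset.univ.sup' ⟨⟨0, hn⟩, Finset.mem_univ _⟩ (fun i => N (a i • α i))) ↔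
    (∀ a : Fin n → ℕ, (∀ i, a i < p) → a ≠ 0 →
        N (∑ i, (a i : ℚ_[p]) • α i) = lam) := by
  have hlam_pos : 0 < lam :=
    hlam ⟨0, hn⟩ ▸ (hnonneg _).lt_of_ne' ((hzero _).not.2 (α.ne_zero _))
  constructor
  · exact fun H d hdp hd0 =>
      (H _).trans (sup'_natCast_smul_eq_of_digits hsmul hlam hlam_pos.le _ hdp hd0)
  · exact fun H => map_sum_smul_eq_sup'_of_digits hsmul hna hlam hlam_pos H _
end

section
/- Let V be a finite-dimensional normed ℚ_p-vector space and let L be a ℤ_p-lattice of rank n in V. If α_1, …, α_n and β_1, …, β_n are two orthogonal bases of L with |α_1| ≥ ⋯ ≥ |α_n| and |β_1| ≥ ⋯ ≥ |β_n|, then |α_i| = |β_i| for all 1 ≤ i ≤ n. -/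
/-!
Write `β_j = ∑ c_jk α_k`. Since `α` and `β` span the same `ℤ_p`-lattice, `C = (c_jk)` lies in
`GL_n(ℤ_p)`. If `|α_i| > |β_i|`, orthogonality of `α` gives `|c_jk| |α_k| ≤ |β_j| < |α_k|`, i.e.
`|c_jk| < 1`, for all `j ≥ i ≥ k`. No permutation maps `{k ≤ i}` into `{j < i}`, so every term of
the Leibniz expansion of `det C` contains such an entry, and `det C` is not a unit.
-/

theorem Matrix.eq_one_of_linearIndependent {R V ι : Type*} [Ring R] [AddCommGroup V] [Module R V]
    [Fintype ι] [DecidableEq ι] {v : ι → V} (hv : LinearIndependent R v) {M : Matrix ι ι R}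
    (hM : ∀ i, ∑ j, M i j • v j = v i) : M = 1 := by
  refine funext fun i => hv.fintypeLinearCombination_injective ?_
  simp [Fintype.linearCombination_apply, hM, Matrix.one_apply]

theorem Matrix.sum_smul_sum_smul {R V ι : Type*} [CommRing R] [AddCommGroup V] [Module R V]
    [Fintype ι] (A B : Matrix ι ι R) (v : ι → V) (i : ι) :
    ∑ j, A i j • ∑ k, B j k • v k = ∑ k, (A * B) i k • v k := by
  simp only [Finset.smul_sum, smul_smul, Matrix.mul_apply, Finset.sum_smul]
  exact Finset.sum_comm

theorem Equiv.Perm.exists_le_le_apply {ι : Type*} [Fintype ι] [LinearOrder ι]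
    (σ : Equiv.Perm ι) (i₀ : ι) : ∃ i ≤ i₀, i₀ ≤ σ i := by
  by_contra! h
  have hcard := Finset.card_le_card_of_injOn σ (s := {i | i ≤ i₀}) (t := {i | i < i₀})
    (fun i hi => by simpa using h i (by simpa using hi)) σ.injective.injOn
  have hlt : ({i | i < i₀} : Finset ι).card < ({i | i ≤ i₀} : Finset ι).card :=
    Finset.card_lt_card (Finset.ssubset_iff_of_subset (fun i hi => by simp_all [le_of_lt]) |>.mpr
      ⟨i₀, by simp⟩)
  omega

theorem Matrix.det_mem_of_corner_mem {R ι : Type*} [CommRing R] [Fintype ι] [DecidableEq ι]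
    [LinearOrder ι] {I : Ideal R} {M : Matrix ι ι R} (i₀ : ι)
    (hM : ∀ j k, i₀ ≤ j → k ≤ i₀ → M j k ∈ I) : M.det ∈ I := by
  rw [Matrix.det_apply]
  refine Ideal.sum_mem _ fun σ _ => ?_
  obtain ⟨i, hi, hσi⟩ := σ.exists_le_le_apply i₀
  rw [Units.smul_def, zsmul_eq_mul]
  exact Ideal.mul_mem_left _ _ (Ideal.prod_mem _ (Finset.mem_univ i) (hM _ _ hσi hi))

namespace PadicInt

variable {p : ℕ} [Fact p.Prime] {V : Type*} [AddCommGroup V] [Module ℚ_[p] V]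
  {ι : Type*} [Fintype ι]

variable (p) in
def lattice (α : ι → V) : Set V := Set.range fun a : ι → ℤ_[p] => ∑ i, (a i : ℚ_[p]) • α i

theorem self_mem_lattice (α : ι → V) (j : ι) : α j ∈ lattice p α := by
  classical
  refine ⟨Pi.single j 1, ?_⟩
  simp [Pi.single_apply, apply_ite (fun z : ℤ_[p] => (z : ℚ_[p])), ite_smul]

theorem exists_matrix_of_lattice_eq {α β : ι → V} (h : lattice p α = lattice p β) :
    ∃ C : Matrix ι ι ℤ_[p], ∀ j, ∑ k, (C j k : ℚ_[p]) • α k = β j := by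
  have hmem j : β j ∈ lattice p α := h ▸ self_mem_lattice β j
  choose C hC using hmem
  exact ⟨C, hC⟩

theorem exists_isUnit_det_of_lattice_eq [DecidableEq ι] {α β : ι → V}
    (hα : LinearIndependent ℚ_[p] α) (h : lattice p α = lattice p β) :
    ∃ C : Matrix ι ι ℤ_[p], IsUnit C.det ∧ ∀ j, ∑ k, (C j k : ℚ_[p]) • α k = β j := by
  obtain ⟨C, hC⟩ := exists_matrix_of_lattice_eq h
  obtain ⟨D, hD⟩ := exists_matrix_of_lattice_eq h.symm
  refine ⟨C, Matrix.isUnit_det_of_left_inverse (B := D) ?_, hC⟩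
  apply Matrix.map_injective (f := (Coe.ringHom : ℤ_[p] →+* ℚ_[p])) Subtype.coe_injective
  dsimp only
  rw [Matrix.map_mul, Matrix.map_one _ (map_zero _) (map_one _)]
  refine Matrix.eq_one_of_linearIndependent hα fun i => ?_
  rw [← Matrix.sum_smul_sum_smul]
  change ∑ j, (D i j : ℚ_[p]) • ∑ k, (C j k : ℚ_[p]) • α k = α i
  simpa only [hC] using hD i

theorem norm_le_of_lattice_eq [LinearOrder ι] (N : V → ℝ) (hnonneg : ∀ v, 0 ≤ N v)
    (hsmul : ∀ (x : ℚ_[p]) (v : V), N (x • v) = ‖x‖ * N v) {α β : ι → V}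
    (hα : LinearIndependent ℚ_[p] α) (hlat : lattice p α = lattice p β)
    (hαorth : ∀ (a : ι → ℚ_[p]) k, N (a k • α k) ≤ N (∑ i, a i • α i))
    (hαsort : Antitone fun i => N (α i)) (hβsort : Antitone fun i => N (β i)) (i : ι) :
    N (α i) ≤ N (β i) := by
  classical
  obtain ⟨C, hCunit, hC⟩ := exists_isUnit_det_of_lattice_eq hα hlat
  by_contra! hi
  have hcorner j k (hj : i ≤ j) (hk : k ≤ i) : C j k ∈ IsLocalRing.maximalIdeal ℤ_[p] := by
    have hlt : ‖(C j k : ℚ_[p])‖ * N (α k) < 1 * N (α k) := calc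
      _ = N ((C j k : ℚ_[p]) • α k) := (hsmul _ _).symm
      _ ≤ N (β j) := hC j ▸ hαorth (fun k => C j k) k
      _ ≤ N (β i) := hβsort hj
      _ < N (α i) := hi
      _ ≤ 1 * N (α k) := (one_mul (N (α k))).symm ▸ hαsort hk
    exact mem_nonunits.mpr (lt_of_mul_lt_mul_right hlt (hnonneg _))
  exact Matrix.det_mem_of_corner_mem i hcorner hCunit

end PadicInt

theorem stmt5_general {p : ℕ} [Fact p.Prime] {V : Type*} [AddCommGroup V] [Module ℚ_[p] V]
    (N : V → ℝ)
    (hnonneg : ∀ v, 0 ≤ N v)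
    (hsmul : ∀ (x : ℚ_[p]) (v : V), N (x • v) = ‖x‖ * N v)
    {n : ℕ} (hn : 0 < n) (α β : Fin n → V)
    (hαindep : LinearIndependent ℚ_[p] α) (hβindep : LinearIndependent ℚ_[p] β)
    -- α and β generate the same ℤ_p-lattice L
    (hlat : (Set.range fun a : Fin n → ℤ_[p] => ∑ i, ((a i : ℚ_[p])) • α i)
          = (Set.range fun a : Fin n → ℤ_[p] => ∑ i, ((a i : ℚ_[p])) • β i))
    -- both are orthogonal
    (hαorth : ∀ a : Fin n → ℚ_[p],
        N (∑ i, a i • α i) =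
          Finset.univ.sup' ⟨⟨0, hn⟩, Finset.mem_univ _⟩ (fun i => N (a i • α i)))
    (hβorth : ∀ a : Fin n → ℚ_[p],
        N (∑ i, a i • β i) =
          Finset.univ.sup' ⟨⟨0, hn⟩, Finset.mem_univ _⟩ (fun i => N (a i • β i)))
    -- sorted by decreasing norm
    (hαsort : ∀ i j : Fin n, i ≤ j → N (α j) ≤ N (α i))
    (hβsort : ∀ i j : Fin n, i ≤ j → N (β j) ≤ N (β i)) :
    ∀ i, N (α i) = N (β i) := by
  have hdom {γ : Fin n → V}
      (horth : ∀ a : Fin n → ℚ_[p], N (∑ i, a i • γ i) =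
        Finset.univ.sup' ⟨⟨0, hn⟩, Finset.mem_univ _⟩ (fun i => N (a i • γ i)))
      (a : Fin n → ℚ_[p]) (k : Fin n) : N (a k • γ k) ≤ N (∑ i, a i • γ i) :=
    horth a ▸ Finset.le_sup' (fun i => N (a i • γ i)) (Finset.mem_univ k)
  intro i
  open PadicInt in
  exact le_antisymm
    (norm_le_of_lattice_eq N hnonneg hsmul hαindep hlat (hdom hαorth) hαsort hβsort i)
    (norm_le_of_lattice_eq N hnonneg hsmul hβindep hlat.symm (hdom hβorth) hβsort hαsort i)

theorem stmt5 {p : ℕ} [Fact p.Prime] {V : Type*} [AddCommGroup V] [Module ℚ_[p] V]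
    [FiniteDimensional ℚ_[p] V]
    (N : V → ℝ)
    (hnonneg : ∀ v, 0 ≤ N v)
    (hzero : ∀ v, N v = 0 ↔ v = 0)
    (hsmul : ∀ (x : ℚ_[p]) (v : V), N (x • v) = ‖x‖ * N v)
    (hna : ∀ v w, N (v + w) ≤ max (N v) (N w))
    {n : ℕ} (hn : 0 < n) (α β : Fin n → V)
    (hαindep : LinearIndependent ℚ_[p] α) (hβindep : LinearIndependent ℚ_[p] β)
    -- α and β generate the same ℤ_p-lattice L
    (hlat : (Set.range fun a : Fin n → ℤ_[p] => ∑ i, ((a i : ℚ_[p])) • α i)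
          = (Set.range fun a : Fin n → ℤ_[p] => ∑ i, ((a i : ℚ_[p])) • β i))
    -- both are orthogonal
    (hαorth : ∀ a : Fin n → ℚ_[p],
        N (∑ i, a i • α i) =
          Finset.univ.sup' ⟨⟨0, hn⟩, Finset.mem_univ _⟩ (fun i => N (a i • α i)))
    (hβorth : ∀ a : Fin n → ℚ_[p],
        N (∑ i, a i • β i) =
          Finset.univ.sup' ⟨⟨0, hn⟩, Finset.mem_univ _⟩ (fun i => N (a i • β i)))
    -- sorted by decreasing norm
    (hαsort : ∀ i j : Fin n, i ≤ j → N (α j) ≤ N (α i))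
    (hβsort : ∀ i j : Fin n, i ≤ j → N (β j) ≤ N (β i)) :
    ∀ i, N (α i) = N (β i) :=
  stmt5_general N hnonneg hsmul hn α β hαindep hβindep hlat hαorth hβorth hαsort hβsort
end

section
/- Let L = L(α_1, …, α_m) be a p-adic lattice in a finite extension K of ℚ_p (m ≥ 2) such that |α_1|_p > |α_2|_p ≥ ⋯ ≥ |α_m|_p. Then the second successive value λ_2 := max{|v|_p : v ∈ L, |v|_p < λ_1}, where λ_1 = |α_1|_p, equals max(|p·α_1|_p, |α_2|_p). -/
/-!
Every lattice vector `v = ∑ aᵢ αᵢ` splits as `a₀ α₀ + w` with `‖w‖ ≤ ‖α₁‖ < ‖α₀‖`. If `a₀` is a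
`p`-adic unit, the ultrametric inequality is an equality and `‖v‖ = ‖α₀‖`; otherwise `p ∣ a₀`, so
`‖v‖ ≤ max ‖p α₀‖ ‖α₁‖`. Both `p α₀` and `α₁` lie in the lattice with norm below `‖α₀‖`.
-/

section PadicAlgebra

variable {p : ℕ} [Fact p.Prime] {K : Type*} [NormedField K] [Algebra ℚ_[p] K]

theorem norm_smul_of_norm_algebraMap (hext : ∀ x : ℚ_[p], ‖algebraMap ℚ_[p] K x‖ = ‖x‖)
    (c : ℚ_[p]) (x : K) : ‖c • x‖ = ‖c‖ * ‖x‖ := by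
  rw [Algebra.smul_def, norm_mul, hext]

variable (hext : ∀ x : ℚ_[p], ‖algebraMap ℚ_[p] K x‖ = ‖x‖)
include hext

theorem norm_padicInt_smul_le (a : ℤ_[p]) (x : K) : ‖(a : ℚ_[p]) • x‖ ≤ ‖x‖ := by
  rw [norm_smul_of_norm_algebraMap hext, PadicInt.padic_norm_e_of_padicInt]
  exact mul_le_of_le_one_left (norm_nonneg x) a.norm_le_one

theorem norm_padicInt_smul_of_isUnit {a : ℤ_[p]} (ha : IsUnit a) (x : K) :
    ‖(a : ℚ_[p]) • x‖ = ‖x‖ := by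
  rw [norm_smul_of_norm_algebraMap hext, PadicInt.padic_norm_e_of_padicInt,
    PadicInt.isUnit_iff.mp ha, one_mul]

theorem norm_padicInt_smul_le_norm_p_smul {a : ℤ_[p]} (ha : ¬IsUnit a) (x : K) :
    ‖(a : ℚ_[p]) • x‖ ≤ ‖(p : ℚ_[p]) • x‖ := by
  have hlt : ‖a‖ < (p : ℝ) ^ (0 : ℤ) := by
    rw [zpow_zero]
    exact lt_of_le_of_ne a.norm_le_one (mt PadicInt.isUnit_iff.mpr ha)
  rw [PadicInt.norm_lt_pow_iff_norm_le_pow_sub_one, zero_sub, zpow_neg_one] at hlt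
  rw [norm_smul_of_norm_algebraMap hext, norm_smul_of_norm_algebraMap hext,
    PadicInt.padic_norm_e_of_padicInt, Padic.norm_p]
  exact mul_le_mul_of_nonneg_right hlt (norm_nonneg x)

theorem norm_p_smul_lt {x : K} (hx : x ≠ 0) : ‖(p : ℚ_[p]) • x‖ < ‖x‖ := by
  rw [norm_smul_of_norm_algebraMap hext]
  exact mul_lt_of_lt_one_left (norm_pos_iff.mpr hx) Padic.norm_p_lt_one

theorem norm_sum_padicInt_smul_eq_or_le [IsUltrametricDist K] {ι : Type*} [Fintype ι]
    (α : ι → K) (i₀ : ι) {B : ℝ} (hB₀ : 0 ≤ B) (hB : ∀ i ≠ i₀, ‖α i‖ ≤ B)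
    (hBlt : B < ‖α i₀‖) (a : ι → ℤ_[p]) :
    ‖∑ i, (a i : ℚ_[p]) • α i‖ = ‖α i₀‖ ∨
      ‖∑ i, (a i : ℚ_[p]) • α i‖ ≤ max ‖(p : ℚ_[p]) • α i₀‖ B := by
  classical
  set rest := ∑ i ∈ Finset.univ.erase i₀, (a i : ℚ_[p]) • α i
  have hrest : ‖rest‖ ≤ B :=
    IsUltrametricDist.norm_sum_le_of_forall_le_of_nonneg hB₀ fun i hi =>
      (norm_padicInt_smul_le hext _ _).trans (hB i (Finset.ne_of_mem_erase hi))
  rw [← Finset.add_sum_erase _ _ (Finset.mem_univ i₀)]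
  by_cases ha : IsUnit (a i₀)
  · have hlead := norm_padicInt_smul_of_isUnit hext ha (α i₀)
    left
    rw [IsUltrametricDist.norm_add_eq_max_of_norm_ne_norm (hlead ▸ (hrest.trans_lt hBlt).ne'),
      hlead, max_eq_left (hrest.trans hBlt.le)]
  · exact Or.inr <| (IsUltrametricDist.norm_add_le_max _ _).trans
      (max_le_max (norm_padicInt_smul_le_norm_p_smul hext ha _) hrest)

end PadicAlgebra

theorem sum_padicInt_single_smul {p : ℕ} [Fact p.Prime] {K : Type*} [Ring K] [Algebra ℚ_[p] K]
    {ι : Type*} [Fintype ι] [DecidableEq ι] (α : ι → K) (j : ι) (c : ℤ_[p]) :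
    ∑ i, ((Pi.single j c : ι → ℤ_[p]) i : ℚ_[p]) • α i = (c : ℚ_[p]) • α j := by
  rw [Finset.sum_eq_single j (fun i _ hi => by simp [hi]) (by simp), Pi.single_eq_same]

theorem stmt6 {p : ℕ} [Fact p.Prime] {K : Type*} [NormedField K]
    [Algebra ℚ_[p] K] [IsUltrametricDist K]
    (hext : ∀ x : ℚ_[p], ‖algebraMap ℚ_[p] K x‖ = ‖x‖)
    {m : ℕ} (hm : 2 ≤ m) (α : Fin m → K)
    (h01 : ‖α ⟨1, by omega⟩‖ < ‖α ⟨0, by omega⟩‖)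
    (hsort : ∀ i j : Fin m, 1 ≤ (i : ℕ) → i ≤ j → ‖α j‖ ≤ ‖α i‖) :
    IsGreatest
      {r : ℝ | ∃ a : Fin m → ℤ_[p],
          ‖∑ i, ((a i : ℚ_[p])) • α i‖ = r ∧ r < ‖α ⟨0, by omega⟩‖}
      (max ‖(p : ℚ_[p]) • α ⟨0, by omega⟩‖ ‖α ⟨1, by omega⟩‖) := by
  set i₀ : Fin m := ⟨0, by omega⟩
  set i₁ : Fin m := ⟨1, by omega⟩
  have hα₀ : α i₀ ≠ 0 := norm_pos_iff.mp ((norm_nonneg _).trans_lt h01)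
  have hB : ∀ i ≠ i₀, ‖α i‖ ≤ ‖α i₁‖ := fun i hi =>
    hsort i₁ i le_rfl (Nat.one_le_iff_ne_zero.mpr (Fin.val_ne_of_ne hi))
  refine ⟨?_, ?_⟩
  · rcases max_choice ‖(p : ℚ_[p]) • α i₀‖ ‖α i₁‖ with h | h <;> rw [h]
    · refine ⟨Pi.single i₀ (p : ℤ_[p]), ?_, norm_p_smul_lt hext hα₀⟩
      rw [sum_padicInt_single_smul, PadicInt.coe_natCast]
    · exact ⟨Pi.single i₁ 1, by rw [sum_padicInt_single_smul, PadicInt.coe_one, one_smul], h01⟩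
  · rintro r ⟨a, rfl, hlt⟩
    exact (norm_sum_padicInt_smul_eq_or_le hext α i₀ (norm_nonneg _) hB h01 a).resolve_left hlt.ne
end

section
/- Let K/ℚ_p be a finite extension with ramification index e and residue degree f, and let L be a ℤ_p-lattice in K of rank m that admits an orthogonal basis α_1, …, α_m with |α_1|_p = ⋯ = |α_f|_p = λ_1 > |α_{f+1}|_p ≥ ⋯ ≥ |α_m|_p > |p·α_1|_p. Suppose β_1, …, β_k ∈ L with |β_i|_p = λ_1 for all i and |∑_{i=1}^k b_i β_i|_p = λ_1 for every nonzero (b_1,…,b_k) ∈ {0,…,p−1}^k. Then k ≤ f. -/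
open Finset

/-
Reduce the coordinates of the `β i` on the `f` basis vectors of maximal norm modulo `p`. If
`k > f`, these `k` vectors of `𝔽_p^f` are linearly dependent, so some digits `b i < p`, not all
zero, make every leading coordinate of `∑ b i • β i` divisible by `p`. Each term of its expansion
in the `α j` then has norm `< λ₁`, and the ultrametric inequality contradicts `‖∑ b i • β i‖ = λ₁`.
-/

theorem exists_ne_zero_sum_smul_eq_zero_of_card_lt {F ι κ : Type*} [Field F] [Fintype ι]
    [Fintype κ] (v : ι → κ → F) (h : Fintype.card κ < Fintype.card ι) :
    ∃ g : ι → F, g ≠ 0 ∧ ∑ i, g i • v i = 0 := by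
  have hdep : ¬ LinearIndependent F v := fun hv => by
    have := hv.fintype_card_le_finrank
    simp only [Module.finrank_fintype_fun_eq_card] at this
    omega
  obtain ⟨g, hsum, i, hi⟩ := Fintype.not_linearIndependent_iff.mp hdep
  exact ⟨g, fun h => hi (congrFun h i), hsum⟩

theorem PadicInt.norm_lt_one_iff_toZMod_eq_zero {p : ℕ} [Fact p.Prime] {x : ℤ_[p]} :
    ‖x‖ < 1 ↔ PadicInt.toZMod x = 0 := by
  rw [← RingHom.mem_ker, PadicInt.ker_toZMod, IsLocalRing.mem_maximalIdeal,
    PadicInt.mem_nonunits]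

theorem PadicInt.sum_coe_smul_sum_coe_smul {p : ℕ} [Fact p.Prime] {ι κ M : Type*} [Fintype ι]
    [Fintype κ] [AddCommMonoid M] [Module ℚ_[p] M] (b : ι → ℤ_[p]) (a : ι → κ → ℤ_[p])
    (v : κ → M) :
    ∑ i, (b i : ℚ_[p]) • ∑ j, (a i j : ℚ_[p]) • v j =
      ∑ j, ((∑ i, b i * a i j : ℤ_[p]) : ℚ_[p]) • v j := by
  simp only [smul_sum, smul_smul, PadicInt.coe_sum, PadicInt.coe_mul, sum_smul]
  exact sum_comm

theorem norm_smul_of_norm_algebraMap_s16 {R K : Type*} [CommSemiring R] [Norm R]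
    [NormedDivisionRing K] [Algebra R K] (hext : ∀ x : R, ‖algebraMap R K x‖ = ‖x‖)
    (x : R) (y : K) : ‖x • y‖ = ‖x‖ * ‖y‖ := by
  rw [Algebra.smul_def, norm_mul, hext]

theorem norm_sum_smul_lt_of_toZMod_eq_zero {p : ℕ} [Fact p.Prime] {K ι : Type*} [NormedField K]
    [Algebra ℚ_[p] K] [IsUltrametricDist K] [Fintype ι]
    (hext : ∀ x : ℚ_[p], ‖algebraMap ℚ_[p] K x‖ = ‖x‖) {α : ι → K} {lam : ℝ}
    (hα : ∀ j, ‖α j‖ ≤ lam) (hlam : 0 < lam) (c : ι → ℤ_[p])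
    (hc : ∀ j, lam ≤ ‖α j‖ → PadicInt.toZMod (c j) = 0) :
    ‖∑ j, (c j : ℚ_[p]) • α j‖ < lam := by
  have hterm : ∀ j, ‖(c j : ℚ_[p]) • α j‖ < lam := fun j => by
    rw [norm_smul_of_norm_algebraMap_s16 hext, PadicInt.padic_norm_e_of_padicInt]
    rcases (hα j).lt_or_eq with hlt | heq
    · exact (mul_le_of_le_one_left (norm_nonneg _) (PadicInt.norm_le_one _)).trans_lt hlt
    · have hcj := PadicInt.norm_lt_one_iff_toZMod_eq_zero.mpr (hc j heq.ge)
      rw [heq]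
      exact mul_lt_of_lt_one_left hlam hcj
  rcases isEmpty_or_nonempty ι with _ | _
  · simpa using hlam
  obtain ⟨j, -, hj⟩ :=
    IsUltrametricDist.exists_norm_finsetSum_le univ fun j => (c j : ℚ_[p]) • α j
  exact hj.trans_lt (hterm j)

theorem stmt16 {p : ℕ} [Fact p.Prime] {K : Type*} [NormedField K]
    [Algebra ℚ_[p] K] [IsUltrametricDist K]
    (hext : ∀ x : ℚ_[p], ‖algebraMap ℚ_[p] K x‖ = ‖x‖)
    (f : ℕ) {m : ℕ} (hfm : f < m) (α : Fin m → K)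
    (lam : ℝ) (hfirst : ∀ i : Fin m, (i : ℕ) < f → ‖α i‖ = lam)
    (hdrop : ∀ i : Fin m, f ≤ (i : ℕ) → ‖α i‖ < lam)
    {k : ℕ} (β : Fin k → K)
    (hβL : ∀ i, β i ∈ Set.range (fun a : Fin m → ℤ_[p] => ∑ j, ((a j : ℚ_[p])) • α j))
    (hcomb : ∀ b : Fin k → ℕ, (∀ i, b i < p) → b ≠ 0 →
      ‖∑ i, ((b i : ℚ_[p])) • β i‖ = lam) :
    k ≤ f := by
  by_contra! hk
  choose a ha using hβL
  obtain ⟨g, hg0, hg⟩ := exists_ne_zero_sum_smul_eq_zero_of_card_lt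
    (fun i (j : Fin f) => PadicInt.toZMod (a i (Fin.castLE hfm.le j))) (by simpa using hk)
  set b : Fin k → ℕ := fun i => (g i).val
  have hb : b ≠ 0 := fun h => hg0 (funext fun i => by simpa [b] using congrFun h i)
  refine (hcomb b (fun i => ZMod.val_lt _) hb).not_lt ?_
  simp only [← ha, ← PadicInt.coe_natCast]
  rw [PadicInt.sum_coe_smul_sum_coe_smul]
  have hlam : 0 < lam := (norm_nonneg _).trans_lt (hdrop ⟨f, hfm⟩ le_rfl)
  refine norm_sum_smul_lt_of_toZMod_eq_zero hext (fun j => ?_) hlam _ (fun j hj => ?_)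
  · exact (lt_or_ge (j : ℕ) f).elim (fun hjf => (hfirst j hjf).le) (fun hjf => (hdrop j hjf).le)
  · have hjf : (j : ℕ) < f := by
      by_contra! hjf
      exact (hdrop j hjf).not_ge hj
    simpa [b, map_sum] using congrFun hg ⟨j, hjf⟩
end
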